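/- Let U be a triangular ring with standard idempotent P, Q = I − P, and let G = (δ_i) be an additive generalized Jordan higher derivation on U with relating higher derivation D = (τ_i), satisfying the inductive hypotheses of Theorem 3.1 at stage n. Then for all X, Y ∈ U: δ_n(PXPYQ) = Σ_{i+j=n} δ_i(PXP)τ_j(PYQ). -/

import Mathlib

set_option linter.unusedSectionVars false

/-- The triangular ring `Tri A M B` of formal upper triangular matrices
`[[a, m], [0, b]]` with `a ∈ A`, `m ∈ M`, `b ∈ B`, where `M` is an
`(A, B)`-bimodule (the right `B`-action encoded as a left `Bᵐᵒᵖ`-action). -/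
@[ext]
structure Tri (A M B : Type*) where
  a : A
  m : M
  b : B

namespace Tri

variable {A M B : Type*} [Ring A] [Ring B] [AddCommGroup M]
  [Module A M] [Module Bᵐᵒᵖ M] [SMulCommClass A Bᵐᵒᵖ M]

instance : Add (Tri A M B) := ⟨fun x y => ⟨x.a + y.a, x.m + y.m, x.b + y.b⟩⟩
instance : Zero (Tri A M B) := ⟨⟨0, 0, 0⟩⟩
instance : Neg (Tri A M B) := ⟨fun x => ⟨-x.a, -x.m, -x.b⟩⟩
instance : One (Tri A M B) := ⟨⟨1, 0, 1⟩⟩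
instance : Mul (Tri A M B) :=
  ⟨fun x y => ⟨x.a * y.a, x.a • y.m + MulOpposite.op y.b • x.m, x.b * y.b⟩⟩

@[simp] lemma add_a (x y : Tri A M B) : (x + y).a = x.a + y.a := rfl
@[simp] lemma add_m (x y : Tri A M B) : (x + y).m = x.m + y.m := rfl
@[simp] lemma add_b (x y : Tri A M B) : (x + y).b = x.b + y.b := rfl
@[simp] lemma zero_a : (0 : Tri A M B).a = 0 := rfl
@[simp] lemma zero_m : (0 : Tri A M B).m = 0 := rfl
@[simp] lemma zero_b : (0 : Tri A M B).b = 0 := rfl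
@[simp] lemma neg_a (x : Tri A M B) : (-x).a = -x.a := rfl
@[simp] lemma neg_m (x : Tri A M B) : (-x).m = -x.m := rfl
@[simp] lemma neg_b (x : Tri A M B) : (-x).b = -x.b := rfl
@[simp] lemma one_a : (1 : Tri A M B).a = 1 := rfl
@[simp] lemma one_m : (1 : Tri A M B).m = 0 := rfl
@[simp] lemma one_b : (1 : Tri A M B).b = 1 := rfl
@[simp] lemma mul_a (x y : Tri A M B) : (x * y).a = x.a * y.a := rfl
@[simp] lemma mul_m (x y : Tri A M B) :
    (x * y).m = x.a • y.m + MulOpposite.op y.b • x.m := rfl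
@[simp] lemma mul_b (x y : Tri A M B) : (x * y).b = x.b * y.b := rfl

/-- The triangular ring structure on `Tri A M B`. -/
instance : Ring (Tri A M B) where
  add_assoc x y z := by ext <;> simp [add_assoc]
  zero_add x := by ext <;> simp
  add_zero x := by ext <;> simp
  add_comm x y := by ext <;> simp [add_comm]
  neg_add_cancel x := by ext <;> simp
  nsmul := nsmulRec
  zsmul := zsmulRec
  left_distrib x y z := by ext <;> simp [mul_add, smul_add, add_smul] <;> abel
  right_distrib x y z := by ext <;> simp [add_mul, smul_add, add_smul] <;> abel
  zero_mul x := by ext <;> simp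
  mul_zero x := by ext <;> simp
  mul_assoc x y z := by
    ext <;> simp [mul_assoc, mul_smul, smul_add, smul_comm] <;> abel
  one_mul x := by ext <;> simp
  mul_one x := by ext <;> simp

end Tri

variable (A M B : Type*) [Ring A] [Ring B] [AddCommGroup M]
  [Module A M] [Module Bᵐᵒᵖ M] [SMulCommClass A Bᵐᵒᵖ M]

/-- The standard idempotent `P = [[1,0],[0,0]]` of the triangular ring. -/
def Tri.P : Tri A M B := ⟨1, 0, 0⟩

variable {A M B}

/-- Membership in the corner `P·U·Q` of the triangular ring `U`,
where `Q = 1 - P`. -/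
def Tri.inPUQ (x : Tri A M B) : Prop :=
  ∃ s : Tri A M B, x = Tri.P A M B * s * (1 - Tri.P A M B)

/-- Membership in `P·U·P + P·U·Q`. -/
def Tri.inPUPQ (x : Tri A M B) : Prop :=
  ∃ s t : Tri A M B,
    x = Tri.P A M B * s * Tri.P A M B + Tri.P A M B * t * (1 - Tri.P A M B)

/-- Membership in `Q·U·Q + P·U·Q`. -/
def Tri.inQUQQ (x : Tri A M B) : Prop :=
  ∃ s t : Tri A M B,
    x = (1 - Tri.P A M B) * s * (1 - Tri.P A M B) +
      Tri.P A M B * t * (1 - Tri.P A M B)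

namespace IsIdempotentElem

variable {R : Type*} [Ring R] {e : R}

theorem corner_mul_offDiag (he : IsIdempotentElem e) (x y : R) :
    e * x * e * (e * y * (1 - e)) = e * x * e * y * (1 - e) := by
  simp only [mul_assoc]
  rw [← mul_assoc e e, he.eq]

theorem offDiag_mul_eq_zero (he : IsIdempotentElem e) (s x y : R) :
    e * s * (1 - e) * (e * x * y) = 0 := by
  simp only [mul_assoc]
  rw [← mul_assoc (1 - e) e, he.one_sub_mul_self, zero_mul, mul_zero, mul_zero]

end IsIdempotentElem

namespace Tri

theorem isIdempotentElem_P : IsIdempotentElem (Tri.P A M B) := by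
  ext <;> simp [Tri.P]

theorem inPUQ.mul_eq_zero {x y : Tri A M B} (hx : x.inPUQ) (hy : y.inPUPQ) : x * y = 0 := by
  obtain ⟨s, rfl⟩ := hx
  obtain ⟨t, u, rfl⟩ := hy
  rw [mul_add, isIdempotentElem_P.offDiag_mul_eq_zero,
    isIdempotentElem_P.offDiag_mul_eq_zero, add_zero]

end Tri

theorem stmt9_general (δ τ : ℕ → Tri A M B → Tri A M B) (n : ℕ)
    (hLem : ∀ X Y, δ n (X * Y + Y * X) =
      ∑ ij ∈ Finset.HasAntidiagonal.antidiagonal n, (δ ij.1 X * τ ij.2 Y + δ ij.1 Y * τ ij.2 X))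
    (hδiPUQ : ∀ i ≤ n, ∀ X, Tri.inPUQ (δ i (Tri.P A M B * X * (1 - Tri.P A M B))))
    (hτPUP : ∀ j X, Tri.inPUPQ (τ j (Tri.P A M B * X * Tri.P A M B))) :
    ∀ X Y, δ n (Tri.P A M B * X * Tri.P A M B * Y * (1 - Tri.P A M B)) =
      ∑ ij ∈ Finset.HasAntidiagonal.antidiagonal n,
        δ ij.1 (Tri.P A M B * X * Tri.P A M B) *
          τ ij.2 (Tri.P A M B * Y * (1 - Tri.P A M B)) := by
  intro X Y
  have hP := Tri.isIdempotentElem_P (A := A) (M := M) (B := B)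
  -- `PYQ · PXP = 0`, so the Jordan identity for `PXP, PYQ` is an identity for `PXPYQ`.
  have hJordan := hLem (Tri.P A M B * X * Tri.P A M B) (Tri.P A M B * Y * (1 - Tri.P A M B))
  rw [hP.offDiag_mul_eq_zero, add_zero, hP.corner_mul_offDiag] at hJordan
  rw [hJordan]
  refine Finset.sum_congr rfl fun ij hij => ?_
  have hi : ij.1 ≤ n := Finset.HasAntidiagonal.antidiagonal.fst_le hij
  rw [(hδiPUQ ij.1 hi Y).mul_eq_zero (hτPUP ij.2 X), add_zero]

/-- Step 5(2) of Theorem 3.1: under the inductive hypotheses at stage `n`,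
`δ_n(PXPYQ) = Σ_{i+j=n} δ_i(PXP)τ_j(PYQ)`. -/
theorem stmt9 (δ τ : ℕ → Tri A M B → Tri A M B) (n : ℕ)
    (hδ0 : δ 0 = id) (hτ0 : τ 0 = id)
    (hδadd : ∀ k X Y, δ k (X + Y) = δ k X + δ k Y)
    (hLem : ∀ X Y, δ n (X * Y + Y * X) =
      ∑ ij ∈ Finset.HasAntidiagonal.antidiagonal n, (δ ij.1 X * τ ij.2 Y + δ ij.1 Y * τ ij.2 X))
    (hδiPUQ : ∀ i ≤ n, ∀ X, Tri.inPUQ (δ i (Tri.P A M B * X * (1 - Tri.P A M B))))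
    (hτPUP : ∀ j X, Tri.inPUPQ (τ j (Tri.P A M B * X * Tri.P A M B)))
    (hτPUQ : ∀ j X, Tri.inPUQ (τ j (Tri.P A M B * X * (1 - Tri.P A M B)))) :
    ∀ X Y, δ n (Tri.P A M B * X * Tri.P A M B * Y * (1 - Tri.P A M B)) =
      ∑ ij ∈ Finset.HasAntidiagonal.antidiagonal n,
        δ ij.1 (Tri.P A M B * X * Tri.P A M B) *
          τ ij.2 (Tri.P A M B * Y * (1 - Tri.P A M B)) :=
  stmt9_general δ τ n hLem hδiPUQ hτPUP
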